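/- arXiv:1706.07493 — 3 statements merged into one kernel-verified Lean document; each statement's English description precedes it below -/
import Mathlib

section
/- Let H be a real Hilbert space with strong Riemannian metrics g0 ∼ g1 (difference of flat maps Hilbert–Schmidt). Then A = (g1♯ ∘ g0♭)^{1/2} is well-defined, satisfies A − I Hilbert–Schmidt, and g1(Av, Aw) = g0(v,w) for all v, w ∈ H. -/
open scoped RealInnerProductSpace

/-- A bounded operator on a real Hilbert space is Hilbert–Schmidt if the sum of
`‖T (b i)‖ ^ 2` over some Hilbert basis is finite. -/
def IsHilbertSchmidt {H : Type*} [NormedAddCommGroup H] [InnerProductSpace ℝ H]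
    (T : H →L[ℝ] H) : Prop :=
  ∃ (ι : Type) (b : HilbertBasis ι ℝ H), Summable fun i => ‖T (b i)‖ ^ 2

/-- A strong Riemannian metric on a real Hilbert space. -/
structure IsStrongMetric {H : Type*} [NormedAddCommGroup H] [InnerProductSpace ℝ H]
    (g : H →L[ℝ] H →L[ℝ] ℝ) : Prop where
  symm : ∀ v w : H, g v w = g w v
  coercive : ∃ c : ℝ, 0 < c ∧ ∀ v : H, c * ‖v‖ ^ 2 ≤ g v v

/-!
A positive operator `B` on a real Hilbert space has a unique positive square root. Scaling `B`
so that `D = 1 - t • B` has norm at most `1`, the iteration `Y ↦ (D + Y²) / 2` started at `0`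
converges in norm, because its increments are dominated by those of the same iteration on the
scalar `1`, which increases to `1`; its limit `Z` satisfies `(1 - Z)² = 1 - D`. The root so obtained commutes
with every operator commuting with `B`, in particular with any other positive root `R'`, and two
commuting positive roots coincide: `(R + R') (R - R') = 0` forces `R - R'` to vanish.

With `G = g1♯`, the conditions on `A` say that `G * A` is positive, and conjugation by `√G`
turns them into positivity of `√G * A * √G⁻¹`; so `A` is obtained from the positive square root
of `√G * C * √G⁻¹`, which is positive since `G * C = g0♯`. Finally `G * (A + 1)` is coercive,
hence invertible, and `G * (A + 1) * (1 - A) = G * (1 - C) = T`, so `A - 1` is a bounded operator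
times `T`.
-/

open Filter

section Iteration

variable {A : Type*} [NormedRing A] [NormedAlgebra ℝ A]

/-- The iteration whose limit is `1 - √(1 - D)`. -/
noncomputable def sqrtIter (D : A) : ℕ → A
  | 0 => 0
  | n + 1 => (2⁻¹ : ℝ) • (D + sqrtIter D n * sqrtIter D n)

lemma sqrtIter_one_real_mem_Icc (n : ℕ) : sqrtIter (1 : ℝ) n ∈ Set.Icc 0 1 := by
  induction n with
  | zero => simp [sqrtIter]
  | succ n ih =>
    obtain ⟨h0, h1⟩ := ih
    simp only [sqrtIter, smul_eq_mul, Set.mem_Icc]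
    constructor <;> nlinarith

lemma sqrtIter_add_two_sub (D : A) (n : ℕ) :
    sqrtIter D (n + 2) - sqrtIter D (n + 1) = (2⁻¹ : ℝ) •
      (sqrtIter D (n + 1) * (sqrtIter D (n + 1) - sqrtIter D n) +
        (sqrtIter D (n + 1) - sqrtIter D n) * sqrtIter D n) := by
  simp only [sqrtIter]
  rw [← smul_sub]
  congr 1
  noncomm_ring

variable {D : A}

lemma norm_sqrtIter_le (hD : ‖D‖ ≤ 1) (n : ℕ) : ‖sqrtIter D n‖ ≤ sqrtIter (1 : ℝ) n := by
  induction n with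
  | zero => simp [sqrtIter]
  | succ n ih =>
    have hn := (sqrtIter_one_real_mem_Icc n).1
    calc ‖sqrtIter D (n + 1)‖ ≤ 2⁻¹ * (‖D‖ + ‖sqrtIter D n‖ * ‖sqrtIter D n‖) := by
          rw [sqrtIter, norm_smul, Real.norm_of_nonneg (by norm_num)]
          gcongr
          exact (norm_add_le _ _).trans (by gcongr; exact norm_mul_le _ _)
      _ ≤ sqrtIter (1 : ℝ) (n + 1) := by
          simp only [sqrtIter, smul_eq_mul]
          gcongr

lemma norm_sqrtIter_succ_sub_le (hD : ‖D‖ ≤ 1) (n : ℕ) :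
    ‖sqrtIter D (n + 1) - sqrtIter D n‖ ≤ sqrtIter (1 : ℝ) (n + 1) - sqrtIter (1 : ℝ) n := by
  induction n with
  | zero =>
    simpa [sqrtIter, norm_smul] using mul_le_mul_of_nonneg_left hD (by norm_num : (0 : ℝ) ≤ 2⁻¹)
  | succ n ih =>
    set y := sqrtIter (1 : ℝ)
    rw [sqrtIter_add_two_sub, sqrtIter_add_two_sub (1 : ℝ), norm_smul,
      Real.norm_of_nonneg (by norm_num), smul_eq_mul]
    gcongr
    refine (norm_add_le _ _).trans ?_
    have hd : 0 ≤ y (n + 1) - y n := (norm_nonneg _).trans ih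
    gcongr
    · exact (norm_mul_le _ _).trans
        (mul_le_mul (norm_sqrtIter_le hD _) ih (norm_nonneg _) (sqrtIter_one_real_mem_Icc _).1)
    · exact (norm_mul_le _ _).trans
        (mul_le_mul ih (norm_sqrtIter_le hD _) (norm_nonneg _) hd)

lemma cauchySeq_sqrtIter (hD : ‖D‖ ≤ 1) : CauchySeq (sqrtIter D) := by
  refine cauchySeq_of_dist_le_of_summable _ (fun n => ?_) (summable_of_sum_range_le
    (c := 1) (fun n => (norm_nonneg _).trans (norm_sqrtIter_succ_sub_le hD n)) fun n => ?_)
  · rw [dist_eq_norm, norm_sub_rev]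
    exact norm_sqrtIter_succ_sub_le hD n
  · rw [Finset.sum_range_sub (sqrtIter (1 : ℝ))]
    simpa [sqrtIter] using (sqrtIter_one_real_mem_Icc n).2

lemma Commute.sqrtIter {S : A} (h : Commute S D) (n : ℕ) : Commute S (sqrtIter D n) := by
  induction n with
  | zero => exact Commute.zero_right S
  | succ n ih => exact ((h.add_right (ih.mul_right ih)).smul_right _)

lemma IsSelfAdjoint.sqrtIter [StarRing A] [StarModule ℝ A] (h : IsSelfAdjoint D) (n : ℕ) :
    IsSelfAdjoint (sqrtIter D n) := by
  induction n with
  | zero => exact IsSelfAdjoint.zero A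
  | succ n ih =>
    exact (IsSelfAdjoint.all (2⁻¹ : ℝ)).smul (h.add ((IsSelfAdjoint.commute_iff ih ih).mp rfl))

end Iteration

section Limit

variable {A : Type*} [NormedRing A] [NormedAlgebra ℝ A] [CompleteSpace A]
  [StarRing A] [StarModule ℝ A] [ContinuousStar A] {D : A}

theorem exists_sqrt_one_sub_of_norm_le_one (hD : ‖D‖ ≤ 1) (hDs : IsSelfAdjoint D) :
    ∃ Z : A, ‖Z‖ ≤ 1 ∧ IsSelfAdjoint Z ∧ (1 - Z) * (1 - Z) = 1 - D ∧
      ∀ S, Commute S D → Commute S Z := by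
  obtain ⟨Z, hZ⟩ := cauchySeq_tendsto_of_complete (cauchySeq_sqrtIter hD)
  have hfix : Z = (2⁻¹ : ℝ) • (D + Z * Z) :=
    tendsto_nhds_unique (hZ.comp (tendsto_add_atTop_nat 1))
      ((tendsto_const_nhds.add (hZ.mul hZ)).const_smul _)
  refine ⟨Z, ?_, ?_, ?_, fun S hS => ?_⟩
  · exact le_of_tendsto hZ.norm (.of_forall fun n =>
      (norm_sqrtIter_le hD n).trans (sqrtIter_one_real_mem_Icc n).2)
  · exact (isClosed_eq continuous_star continuous_id).mem_of_tendsto hZ (.of_forall hDs.sqrtIter)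
  · have h2Z : Z + Z = D + Z * Z := by
      rw [← two_smul ℝ Z]
      conv_lhs => rw [hfix]
      rw [smul_smul]; norm_num
    calc (1 - Z) * (1 - Z) = 1 - (Z + Z) + Z * Z := by noncomm_ring
      _ = 1 - D := by rw [h2Z]; abel
  · exact (isClosed_eq (continuous_const_mul S) (continuous_mul_const S)).mem_of_tendsto hZ
      (.of_forall (hS.sqrtIter ·))

end Limit

namespace ContinuousLinearMap

variable {E : Type*} [NormedAddCommGroup E] [InnerProductSpace ℝ E]

lemma opNorm_le_of_abs_inner_le {T : E →L[ℝ] E} (hT : T.IsSymmetric) {M : ℝ}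
    (hM : 0 ≤ M) (h : ∀ x, |⟪T x, x⟫| ≤ M * ‖x‖ ^ 2) : ‖T‖ ≤ M := by
  rw [T.norm_eq_iSup_rayleighQuotient hT]
  refine ciSup_le fun x => ?_
  rcases eq_or_ne x 0 with rfl | hx
  · simpa using hM
  · rw [rayleighQuotient, reApplyInnerSelf_apply, abs_div, abs_sq,
      div_le_iff₀ (by positivity), RCLike.re_to_real]
    exact h x

lemma IsPositive.norm_one_sub_smul_le_one {B : E →L[ℝ] E} (hB : B.IsPositive) {t : ℝ}
    (ht : 0 ≤ t) (htB : t * ‖B‖ ≤ 1) : ‖1 - t • B‖ ≤ 1 := by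
  refine opNorm_le_of_abs_inner_le (fun x y => ?_) zero_le_one fun x => ?_
  · simp [inner_sub_left, inner_sub_right, real_inner_smul_left, real_inner_smul_right,
      hB.inner_left_eq_inner_right x y]
  · have hBx : ⟪B x, x⟫ ≤ ‖B‖ * ‖x‖ ^ 2 := by
      rw [sq, ← mul_assoc]
      exact (real_inner_le_norm _ _).trans (by gcongr; exact B.le_opNorm x)
    have h0 := hB.inner_nonneg_left x
    have : t * ⟪B x, x⟫ ≤ ‖x‖ ^ 2 := by nlinarith [sq_nonneg ‖x‖]
    simp only [sub_apply, one_apply_eq_self, smul_apply, inner_sub_left,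
      real_inner_smul_left, real_inner_self_eq_norm_sq, abs_le]
    constructor <;> nlinarith [mul_nonneg ht h0]

lemma isUnit_of_forall_mul_sq_le_inner [CompleteSpace E] {T : E →L[ℝ] E} {c : ℝ} (hc : 0 < c)
    (h : ∀ x, c * ‖x‖ ^ 2 ≤ ⟪T x, x⟫) : IsUnit T :=
  isUnit_of_forall_le_norm_inner_map T (c := ⟨c, hc.le⟩) hc fun x => by
    rw [Real.norm_eq_abs, mul_comm]
    exact (h x).trans (le_abs_self _)

variable [CompleteSpace E]

lemma IsPositive.conj_of_isSelfAdjoint {T S : E →L[ℝ] E} (hT : T.IsPositive)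
    (hS : IsSelfAdjoint S) : (S * T * S).IsPositive := by
  convert hT.conj_adjoint S using 1
  rw [← star_eq_adjoint, hS.star_eq]
  rfl

theorem IsPositive.exists_sqrt {B : E →L[ℝ] E} (hB : B.IsPositive) :
    ∃ R : E →L[ℝ] E, R.IsPositive ∧ R * R = B ∧ ∀ S, Commute S B → Commute S R := by
  set t : ℝ := (‖B‖ + 1)⁻¹
  have ht : 0 < t := by positivity
  have hD : ‖1 - t • B‖ ≤ 1 :=
    hB.norm_one_sub_smul_le_one ht.le (by rw [inv_mul_le_iff₀ (by positivity)]; linarith)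
  obtain ⟨Z, hZ1, hZs, hZ, hcomm⟩ := exists_sqrt_one_sub_of_norm_le_one hD
    (IsSelfAdjoint.one _ |>.sub ((IsSelfAdjoint.all t).smul hB.isSelfAdjoint))
  have hZpos : (1 - Z).IsPositive := by
    refine (isPositive_iff' _).2 ⟨IsSelfAdjoint.one _ |>.sub hZs, fun x => ?_⟩
    have : ⟪Z x, x⟫ ≤ ‖x‖ ^ 2 := by
      rw [sq]
      exact (real_inner_le_norm _ _).trans
        (by gcongr; exact (Z.le_opNorm x).trans (mul_le_of_le_one_left (norm_nonneg x) hZ1))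
    simpa [inner_sub_left, real_inner_self_eq_norm_sq] using this
  refine ⟨√t⁻¹ • (1 - Z), hZpos.smul_of_nonneg (Real.sqrt_nonneg _), ?_, fun S hS => ?_⟩
  · rw [smul_mul_smul_comm, hZ, sub_sub_cancel, Real.mul_self_sqrt (by positivity), smul_smul,
      inv_mul_cancel₀ ht.ne', one_smul]
  · exact ((Commute.one_right S).sub_right
      (hcomm S ((Commute.one_right S).sub_right (hS.smul_right t)))).smul_right _

lemma IsPositive.apply_eq_zero_of_inner_eq_zero {B : E →L[ℝ] E} (hB : B.IsPositive) {x : E}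
    (hx : ⟪B x, x⟫ = 0) : B x = 0 := by
  obtain ⟨R, hR, rfl, -⟩ := hB.exists_sqrt
  have hRx : R x = 0 := by
    rw [← inner_self_eq_zero (𝕜 := ℝ), ← hR.inner_left_eq_inner_right]
    exact hx
  simp [hRx]

lemma IsPositive.eq_of_commute_of_mul_self_eq {R R' : E →L[ℝ] E} (hR : R.IsPositive)
    (hR' : R'.IsPositive) (hc : Commute R R') (h : R * R = R' * R') : R = R' := by
  have hprod : (R + R') * (R - R') = 0 := by
    rw [add_mul, mul_sub, mul_sub, h, hc.eq]
    abel
  ext v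
  set w := R v - R' v
  have hsum : R w + R' w = 0 := by
    simpa [w] using congr($hprod v)
  have hinner : ⟪R w, w⟫ + ⟪R' w, w⟫ = 0 := by rw [← inner_add_left, hsum, inner_zero_left]
  have hRw : R w = 0 := hR.apply_eq_zero_of_inner_eq_zero
    (by linarith [hR.inner_nonneg_left w, hR'.inner_nonneg_left w])
  have hR'w : R' w = 0 := hR'.apply_eq_zero_of_inner_eq_zero
    (by linarith [hR.inner_nonneg_left w, hR'.inner_nonneg_left w])
  have hw : ⟪w, w⟫ = 0 := by
    calc ⟪w, w⟫ = ⟪v, R w⟫ - ⟪v, R' w⟫ := by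
          rw [inner_sub_left, hR.inner_left_eq_inner_right, hR'.inner_left_eq_inner_right]
      _ = 0 := by rw [hRw, hR'w, inner_zero_right, sub_zero]
  exact sub_eq_zero.mp (inner_self_eq_zero.mp hw)

theorem IsPositive.existsUnique_sqrt {B : E →L[ℝ] E} (hB : B.IsPositive) :
    ∃! R : E →L[ℝ] E, R.IsPositive ∧ R * R = B := by
  obtain ⟨R, hR, hRB, hcomm⟩ := hB.exists_sqrt
  refine ⟨R, ⟨hR, hRB⟩, fun R' ⟨hR', hR'B⟩ => ?_⟩
  have hc : Commute R' B := hR'B ▸ (Commute.refl R').mul_right (Commute.refl R')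
  exact hR'.eq_of_commute_of_mul_self_eq hR (hcomm R' hc) (hR'B.trans hRB.symm)

theorem existsUnique_mul_self_eq_of_isPositive_mul {G C : E →L[ℝ] E} (hG : G.IsPositive)
    (hGu : IsUnit G) (hGC : (G * C).IsPositive) :
    ∃! A : E →L[ℝ] E, (G * A).IsPositive ∧ A * A = C := by
  obtain ⟨Rg, hRg, rfl, -⟩ := hG.exists_sqrt
  obtain ⟨u, rfl⟩ := isUnit_mul_self_iff.mp hGu
  have hu : IsSelfAdjoint (u : E →L[ℝ] E) := hRg.isSelfAdjoint
  have hu' : IsSelfAdjoint (↑u⁻¹ : E →L[ℝ] E) := Units.eq_inv_of_mul_eq_one_left <| by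
    rw [← hu.star_eq, ← star_mul, Units.inv_mul, star_one]
  have key : ∀ X : E →L[ℝ] E, (↑u * ↑u * X).IsPositive ↔ (↑u * X * ↑u⁻¹).IsPositive := fun X =>
    ⟨fun h => by simpa [mul_assoc] using h.conj_of_isSelfAdjoint hu',
     fun h => by simpa [mul_assoc] using h.conj_of_isSelfAdjoint hu⟩
  obtain ⟨R, ⟨hR, hRB⟩, huniq⟩ := ((key C).1 hGC).existsUnique_sqrt
  refine ⟨(↑u⁻¹ * R * ↑u : E →L[ℝ] E), ⟨(key _).2 (by simpa [mul_assoc] using hR), ?_⟩,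
    fun A ⟨hA, hAC⟩ => ?_⟩
  · calc (↑u⁻¹ * R * ↑u : E →L[ℝ] E) * (↑u⁻¹ * R * ↑u)
        = ↑u⁻¹ * (R * R) * ↑u := by simp [mul_assoc]
      _ = C := by simp [hRB, mul_assoc]
  · have := huniq (↑u * A * ↑u⁻¹) ⟨(key A).1 hA, by simp [← hAC, mul_assoc]⟩
    simp [← this, mul_assoc]

end ContinuousLinearMap

open InnerProductSpace

local postfix:1024 "♯" => continuousLinearMapOfBilin

section Metric

variable {H : Type*} [NormedAddCommGroup H] [InnerProductSpace ℝ H] [CompleteSpace H]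

lemma isPositive_sharp_mul_iff {g : H →L[ℝ] H →L[ℝ] ℝ} (hg : ∀ v w, g v w = g w v)
    (A : H →L[ℝ] H) :
    (g♯ * A).IsPositive ↔ (∀ v w, g (A v) w = g v (A w)) ∧ ∀ v, 0 ≤ g (A v) v := by
  simp only [ContinuousLinearMap.isPositive_iff, LinearMap.IsSymmetric,
    ContinuousLinearMap.coe_coe, mul_apply_eq_comp, real_inner_comm (g♯ _),
    continuousLinearMapOfBilin_apply, hg _ (A _)]

lemma IsStrongMetric.isPositive_sharp {g : H →L[ℝ] H →L[ℝ] ℝ} (hg : IsStrongMetric g) :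
    (g♯).IsPositive := by
  obtain ⟨c, hc, hcoe⟩ := hg.coercive
  simpa using (isPositive_sharp_mul_iff hg.symm 1).2
    ⟨fun v w => by simp, fun v => (by positivity : 0 ≤ c * ‖v‖ ^ 2).trans (hcoe v)⟩

end Metric

lemma IsHilbertSchmidt.mul_left {H : Type*} [NormedAddCommGroup H] [InnerProductSpace ℝ H]
    {T : H →L[ℝ] H} (hT : IsHilbertSchmidt T) (K : H →L[ℝ] H) : IsHilbertSchmidt (K * T) := by
  obtain ⟨ι, b, hb⟩ := hT
  refine ⟨ι, b, .of_nonneg_of_le (fun i => by positivity) (fun i => ?_) (hb.mul_left (‖K‖ ^ 2))⟩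
  rw [← mul_pow]
  gcongr
  exact K.le_opNorm _

theorem sqrt_of_metric_comparison_general
    {H : Type*} [NormedAddCommGroup H] [InnerProductSpace ℝ H] [CompleteSpace H]
    (g0 g1 : H →L[ℝ] H →L[ℝ] ℝ)
    (h0 : IsStrongMetric g0) (h1 : IsStrongMetric g1)
    (T : H →L[ℝ] H) (hT : ∀ v w : H, ⟪T v, w⟫ = g1 v w - g0 v w)
    (hHS : IsHilbertSchmidt T)
    (C : H →L[ℝ] H) (hC : ∀ v w : H, g1 (C v) w = g0 v w) :
    ∃ A : H →L[ℝ] H,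
      ((∀ v w : H, g1 (A v) w = g1 v (A w)) ∧ (∀ v : H, 0 ≤ g1 (A v) v) ∧ A * A = C) ∧
      (∀ A' : H →L[ℝ] H,
        ((∀ v w : H, g1 (A' v) w = g1 v (A' w)) ∧ (∀ v : H, 0 ≤ g1 (A' v) v) ∧ A' * A' = C)
        → A' = A) ∧
      IsHilbertSchmidt (A - 1) ∧
      (∀ v w : H, g1 (A v) (A w) = g0 v w) := by
  obtain ⟨c, hc, hcoe⟩ := h1.coercive
  have hGC : g1♯ * C = g0♯ := by
    ext1 v; refine ext_inner_right ℝ fun w => ?_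
    simp [continuousLinearMapOfBilin_apply, hC]
  have hTC : T = g1♯ * (1 - C) := by
    ext1 v; refine ext_inner_right ℝ fun w => ?_
    simp [continuousLinearMapOfBilin_apply, hC, hT, inner_sub_left]
  obtain ⟨A, ⟨hA, hAC⟩, huniq⟩ := ContinuousLinearMap.existsUnique_mul_self_eq_of_isPositive_mul
    h1.isPositive_sharp (ContinuousLinearMap.isUnit_of_forall_mul_sq_le_inner hc
      fun x => by simpa [continuousLinearMapOfBilin_apply] using hcoe x)
    (hGC ▸ h0.isPositive_sharp)
  obtain ⟨hAs, hAp⟩ := (isPositive_sharp_mul_iff h1.symm A).1 hA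
  refine ⟨A, ⟨hAs, hAp, hAC⟩, fun A' ⟨hA's, hA'p, hA'C⟩ =>
    huniq A' ⟨(isPositive_sharp_mul_iff h1.symm A').2 ⟨hA's, hA'p⟩, hA'C⟩, ?_, fun v w => ?_⟩
  · obtain ⟨u, hu⟩ := ContinuousLinearMap.isUnit_of_forall_mul_sq_le_inner (T := g1♯ * (A + 1))
      hc fun x => by
        simpa [continuousLinearMapOfBilin_apply, mul_add, inner_add_left]
          using add_le_add (hAp x) (hcoe x)
    have hTu : T = ↑u * (1 - A) := by
      rw [hu, hTC, mul_assoc, ← hAC]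
      congr 1
      noncomm_ring
    have hA1 : A - 1 = -(↑u⁻¹ : H →L[ℝ] H) * T := by
      rw [hTu, neg_mul, Units.inv_mul_cancel_left, neg_sub]
    rw [hA1]
    exact hHS.mul_left _
  · calc g1 (A v) (A w) = g1 (A (A v)) w := (hAs _ _).symm
      _ = g0 v w := by rw [← mul_apply_eq_comp, hAC, hC]

/-- for strong metrics `g0 ∼ g1` (Hilbert–Schmidt difference of flat maps),
the positive square root `A = (g1♯ ∘ g0♭)^{1/2}` is well-defined (it exists and is the
unique `g1`-symmetric nonnegative square root of `C = g1♯ ∘ g0♭`), satisfies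
`A - I` Hilbert–Schmidt, and `g1(Av, Aw) = g0(v, w)` for all `v, w`. -/
theorem sqrt_of_metric_comparison
    {H : Type*} [NormedAddCommGroup H] [InnerProductSpace ℝ H] [CompleteSpace H]
    [TopologicalSpace.SeparableSpace H]
    (g0 g1 : H →L[ℝ] H →L[ℝ] ℝ)
    (h0 : IsStrongMetric g0) (h1 : IsStrongMetric g1)
    (T : H →L[ℝ] H) (hT : ∀ v w : H, ⟪T v, w⟫ = g1 v w - g0 v w)
    (hHS : IsHilbertSchmidt T)
    (C : H →L[ℝ] H) (hC : ∀ v w : H, g1 (C v) w = g0 v w) :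
    ∃ A : H →L[ℝ] H,
      ((∀ v w : H, g1 (A v) w = g1 v (A w)) ∧ (∀ v : H, 0 ≤ g1 (A v) v) ∧ A * A = C) ∧
      (∀ A' : H →L[ℝ] H,
        ((∀ v w : H, g1 (A' v) w = g1 v (A' w)) ∧ (∀ v : H, 0 ≤ g1 (A' v) v) ∧ A' * A' = C)
        → A' = A) ∧
      IsHilbertSchmidt (A - 1) ∧
      (∀ v w : H, g1 (A v) (A w) = g0 v w) :=
  sqrt_of_metric_comparison_general g0 g1 h0 h1 T hT hHS C hC
end

section
/- Let (H, ω) be a strongly symplectic real Hilbert space and J0, J1 two ω-compatible complex structures with J0 − J1 Hilbert–Schmidt. For every t ∈ [0,1], the spectrum of K_t = (1−t)J0 + tJ1 (complexified) is contained in the nonzero purely imaginary numbers. -/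
open scoped RealInnerProductSpace

/-- A strong symplectic form on a real Hilbert space. -/
structure IsStrongSymplectic {H : Type*} [NormedAddCommGroup H] [InnerProductSpace ℝ H]
    (ω : H →L[ℝ] H →L[ℝ] ℝ) : Prop where
  skew : ∀ v w : H, ω v w = - ω w v
  flat_bijective : Function.Bijective (fun v : H => (ω v : H →L[ℝ] ℝ))

/-- An `ω`-compatible complex structure. -/
structure IsCompatibleCplxStr {H : Type*} [NormedAddCommGroup H] [InnerProductSpace ℝ H]
    (ω : H →L[ℝ] H →L[ℝ] ℝ) (J : H →L[ℝ] H) : Prop where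
  square : J * J = -1
  symm : ∀ v w : H, ω v (J w) = ω w (J v)
  coercive : ∃ c : ℝ, 0 < c ∧ ∀ v : H, c * ‖v‖ ^ 2 ≤ ω v (J v)

/-!
Put `g v w = ω v (K w)` for `K = (1 - t) • J0 + t • J1`. Compatibility of `J0` and `J1` makes `g`
symmetric and coercive, and skewness of `ω` then makes `K` skew-adjoint for `g`. For such a `K`
and `a ≠ 0`, the identity `g ((K - a)² v + b² v) (2a v - K v) = 2a (a² + b²) g v v` bounds
`(K - a)² + b²` from below, the same bound holds for its `g`-adjoint `(K + a)² + b²`, and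
Lax–Milgram turns the two bounds into invertibility. For `a = b = 0`, `K` is bounded below by `ω v (K v) ≥ c ‖v‖²` and has
`g`-adjoint `-K`.
-/

open scoped NNReal

section Antilipschitz

variable {𝕜 E F G V : Type*} [NontriviallyNormedField 𝕜]
  [NormedAddCommGroup E] [NormedSpace 𝕜 E] [NormedAddCommGroup F] [NormedSpace 𝕜 F]
  [NormedAddCommGroup G] [NormedSpace 𝕜 G] [NormedAddCommGroup V] [NormedSpace 𝕜 V]

theorem ContinuousLinearMap.antilipschitz_of_le_norm_apply₂ (B : F →L[𝕜] G →L[𝕜] V)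
    (L : E →L[𝕜] F) (A : E →L[𝕜] G) {c : ℝ} (hc : 0 < c)
    (h : ∀ v, c * ‖v‖ ^ 2 ≤ ‖B (L v) (A v)‖) :
    AntilipschitzWith (‖B‖ * ‖A‖ / c).toNNReal L := by
  refine L.antilipschitz_of_bound fun v => ?_
  rcases eq_or_ne v 0 with rfl | hv
  · simp
  have hbound : ‖v‖ * (c * ‖v‖) ≤ ‖v‖ * (‖B‖ * ‖A‖ * ‖L v‖) :=
    calc ‖v‖ * (c * ‖v‖) = c * ‖v‖ ^ 2 := by ring
      _ ≤ ‖B (L v) (A v)‖ := h v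
      _ ≤ ‖B‖ * ‖L v‖ * ‖A v‖ := B.le_opNorm₂ _ _
      _ ≤ ‖B‖ * ‖L v‖ * (‖A‖ * ‖v‖) := by gcongr; exact A.le_opNorm v
      _ = ‖v‖ * (‖B‖ * ‖A‖ * ‖L v‖) := by ring
  rw [Real.coe_toNNReal _ (by positivity), div_mul_eq_mul_div, le_div_iff₀ hc, mul_comm]
  exact le_of_mul_le_mul_left hbound (norm_pos_iff.mpr hv)

end Antilipschitz

section LaxMilgram

variable {E : Type*} [NormedAddCommGroup E] [InnerProductSpace ℝ E] [CompleteSpace E]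
  {g : E →L[ℝ] E →L[ℝ] ℝ}

theorem IsCoercive.isUnit_of_antilipschitz_of_injective_adjoint (hg : IsCoercive g)
    {T T' : E →L[ℝ] E} (hadj : ∀ v w, g (T' v) w = g v (T w))
    {C : ℝ≥0} (hT : AntilipschitzWith C T) (hT' : Function.Injective T') : IsUnit T := by
  rw [ContinuousLinearMap.isUnit_iff_bijective,
    ContinuousLinearMap.bijective_iff_dense_range_and_antilipschitz]
  refine ⟨?_, C, hT⟩
  rw [Submodule.topologicalClosure_eq_top_iff, Submodule.eq_bot_iff]
  intro w hw
  -- Lax–Milgram gives `w = P y` with `⟪P y, ·⟫ = g y`, so `w ⊥ range T` means `g (T' y) = 0`.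
  set P := hg.continuousLinearEquivOfBilin
  set y := P.symm w
  have hT'y : ∀ v, g (T' y) v = 0 := fun v => by
    rw [hadj, ← hg.continuousLinearEquivOfBilin_apply, P.apply_symm_apply]
    exact (Submodule.mem_orthogonal' _ _).mp hw _ ⟨v, rfl⟩
  obtain ⟨c, hc, hcoer⟩ := hg
  have hzero : T' y = 0 := by
    by_contra hne
    have hpos := norm_pos_iff.mpr hne
    nlinarith [hcoer (T' y), hT'y (T' y), mul_pos (mul_pos hc hpos) hpos]
  simpa [y] using hT' (hzero.trans (map_zero T').symm)

end LaxMilgram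

section SkewOperator

variable {E : Type*} [NormedAddCommGroup E] [NormedSpace ℝ E]
  {g : E →L[ℝ] E →L[ℝ] ℝ} {T : E →L[ℝ] E}

/-- `(T - λ)(T - λ̄)` for `λ = a + b i`, written over `ℝ`. -/
def shiftedSq (T : E →L[ℝ] E) (a b : ℝ) : E →L[ℝ] E := (T - a • 1) ^ 2 + b ^ 2 • 1

theorem shiftedSq_apply (T : E →L[ℝ] E) (a b : ℝ) (v : E) :
    shiftedSq T a b v = T (T v) - (2 * a) • T v + (a ^ 2 + b ^ 2) • v := by
  simp only [shiftedSq, add_apply, smul_apply, one_apply_eq_self, sq, mul_apply_eq_comp,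
    sub_apply, map_sub, map_smul]
  module

theorem apply_shiftedSq_neg_eq (hskew : ∀ v w, g (T v) w = -g v (T w)) (a b : ℝ) (v w : E) :
    g (shiftedSq (-T) a b v) w = g v (shiftedSq T a b w) := by
  simp only [shiftedSq_apply, neg_apply, map_neg, neg_neg, smul_neg, map_add, map_sub, map_smul,
    add_apply, sub_apply, smul_apply, smul_eq_mul, hskew]
  ring

theorem apply_shiftedSq_two_smul_sub (hsymm : ∀ v w, g v w = g w v)
    (hskew : ∀ v w, g (T v) w = -g v (T w)) (a b : ℝ) (v : E) :
    g (shiftedSq T a b v) ((2 * a) • v - T v) = 2 * a * (a ^ 2 + b ^ 2) * g v v := by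
  have hleft : ∀ x, g (T x) x = 0 := fun x => by linarith [hskew x x, hsymm x (T x)]
  have hright : ∀ x, g x (T x) = 0 := fun x => by linarith [hskew x x, hsymm x (T x)]
  simp only [shiftedSq_apply, map_add, map_sub, map_smul, add_apply, sub_apply, smul_apply,
    smul_eq_mul]
  linear_combination (2 * a) * hskew (T v) v - hleft (T v) - (4 * a ^ 2) * hleft v
    - (a ^ 2 + b ^ 2) * hright v

theorem IsCoercive.antilipschitz_shiftedSq (hg : IsCoercive g) (hsymm : ∀ v w, g v w = g w v)
    (hskew : ∀ v w, g (T v) w = -g v (T w)) {a : ℝ} (ha : a ≠ 0) (b : ℝ) :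
    ∃ C, AntilipschitzWith C (shiftedSq T a b) := by
  obtain ⟨c, hc, hcoer⟩ := hg
  have hr : 0 < a ^ 2 + b ^ 2 := by positivity
  refine ⟨_, g.antilipschitz_of_le_norm_apply₂ _ ((2 * a) • (1 : E →L[ℝ] E) - T)
    (c := 2 * |a| * (a ^ 2 + b ^ 2) * c) (by positivity) fun v => ?_⟩
  calc 2 * |a| * (a ^ 2 + b ^ 2) * c * ‖v‖ ^ 2
      = 2 * |a| * (a ^ 2 + b ^ 2) * (c * ‖v‖ * ‖v‖) := by ring
    _ ≤ 2 * |a| * (a ^ 2 + b ^ 2) * g v v := by gcongr; exact hcoer v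
    _ ≤ |2 * a * (a ^ 2 + b ^ 2) * g v v| := by
        rw [abs_mul, abs_mul, abs_mul, abs_two, abs_of_pos hr]
        gcongr
        exact le_abs_self _
    _ = ‖g (shiftedSq T a b v) (((2 * a) • (1 : E →L[ℝ] E) - T) v)‖ := by
        rw [Real.norm_eq_abs, sub_apply, smul_apply, one_apply_eq_self,
          apply_shiftedSq_two_smul_sub hsymm hskew]

end SkewOperator

section SkewOperatorHilbert

variable {E : Type*} [NormedAddCommGroup E] [InnerProductSpace ℝ E] [CompleteSpace E]
  {g : E →L[ℝ] E →L[ℝ] ℝ} {T : E →L[ℝ] E}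

theorem IsCoercive.isUnit_shiftedSq (hg : IsCoercive g)
    (hsymm : ∀ v w, g v w = g w v) (hskew : ∀ v w, g (T v) w = -g v (T w)) {a : ℝ} (ha : a ≠ 0)
    (b : ℝ) : IsUnit (shiftedSq T a b) := by
  have hskew_neg : ∀ v w, g ((-T) v) w = -g v ((-T) w) := by simp [hskew]
  obtain ⟨C, hC⟩ := hg.antilipschitz_shiftedSq hsymm hskew ha b
  obtain ⟨C', hC'⟩ := hg.antilipschitz_shiftedSq hsymm hskew_neg ha b
  exact hg.isUnit_of_antilipschitz_of_injective_adjoint (apply_shiftedSq_neg_eq hskew a b) hC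
    hC'.injective

end SkewOperatorHilbert

section Symplectic

variable {H : Type*} [NormedAddCommGroup H] [InnerProductSpace ℝ H]
  {ω : H →L[ℝ] H →L[ℝ] ℝ} {K : H →L[ℝ] H}

theorem bilinearComp_id_skew (hω : ∀ v w, ω v w = -ω w v)
    (hK : ∀ v w, ω v (K w) = ω w (K v)) (v w : H) :
    ω.bilinearComp (.id ℝ H) K (K v) w = -ω.bilinearComp (.id ℝ H) K v (K w) := by
  simp only [ContinuousLinearMap.bilinearComp_apply, ContinuousLinearMap.id_apply]
  rw [hK v (K w), hω]

theorem IsCoercive.isUnit_of_bilinearComp [CompleteSpace H] (hω : ∀ v w, ω v w = -ω w v)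
    (hK : ∀ v w, ω v (K w) = ω w (K v)) (hg : IsCoercive (ω.bilinearComp (.id ℝ H) K)) :
    IsUnit K := by
  have ⟨c, hc, hcoer⟩ := hg
  have hK_anti := ω.flip.antilipschitz_of_le_norm_apply₂ K 1 hc fun v => by
    simpa [sq, mul_assoc] using (hcoer v).trans (le_abs_self _)
  refine hg.isUnit_of_antilipschitz_of_injective_adjoint (T' := -K) (fun v w => ?_) hK_anti
    (neg_injective.comp hK_anti.injective)
  rw [neg_apply, map_neg, neg_apply, bilinearComp_id_skew hω hK, neg_neg]

theorem IsCoercive.isUnit_shiftedSq_of_bilinearComp [CompleteSpace H]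
    (hω : ∀ v w, ω v w = -ω w v) (hK : ∀ v w, ω v (K w) = ω w (K v))
    (hg : IsCoercive (ω.bilinearComp (.id ℝ H) K)) {a : ℝ} (ha : a ≠ 0) (b : ℝ) :
    IsUnit (shiftedSq K a b) :=
  hg.isUnit_shiftedSq (fun v w => by simpa using hK v w) (bilinearComp_id_skew hω hK) ha b

namespace IsCompatibleCplxStr

variable {J0 J1 : H →L[ℝ] H}

theorem symm_interpolation (h0 : IsCompatibleCplxStr ω J0) (h1 : IsCompatibleCplxStr ω J1)
    (t : ℝ) (v w : H) :
    ω v (((1 - t) • J0 + t • J1) w) = ω w (((1 - t) • J0 + t • J1) v) := by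
  simp only [add_apply, smul_apply, map_add, map_smul, h0.symm v w, h1.symm v w]

theorem isCoercive_interpolation (h0 : IsCompatibleCplxStr ω J0)
    (h1 : IsCompatibleCplxStr ω J1) {t : ℝ} (ht : t ∈ Set.Icc (0 : ℝ) 1) :
    IsCoercive (ω.bilinearComp (.id ℝ H) ((1 - t) • J0 + t • J1)) := by
  obtain ⟨c0, hc0, hcoer0⟩ := h0.coercive
  obtain ⟨c1, hc1, hcoer1⟩ := h1.coercive
  refine ⟨min c0 c1, lt_min hc0 hc1, fun v => ?_⟩
  have hsplit : ω.bilinearComp (.id ℝ H) ((1 - t) • J0 + t • J1) v v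
      = (1 - t) * ω v (J0 v) + t * ω v (J1 v) := by
    simp
  have hJ0 : (1 - t) * (min c0 c1 * ‖v‖ ^ 2) ≤ (1 - t) * ω v (J0 v) := by
    gcongr
    · linarith [ht.2]
    · exact (mul_le_mul_of_nonneg_right (min_le_left _ _) (sq_nonneg _)).trans (hcoer0 v)
  have hJ1 : t * (min c0 c1 * ‖v‖ ^ 2) ≤ t * ω v (J1 v) := by
    gcongr
    · exact ht.1
    · exact (mul_le_mul_of_nonneg_right (min_le_right _ _) (sq_nonneg _)).trans (hcoer1 v)
  rw [hsplit]
  nlinarith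

end IsCompatibleCplxStr

end Symplectic

theorem spectrum_of_interpolation_imaginary_general
    {H : Type*} [NormedAddCommGroup H] [InnerProductSpace ℝ H] [CompleteSpace H]
    (ω : H →L[ℝ] H →L[ℝ] ℝ) (hω : IsStrongSymplectic ω)
    (J0 J1 : H →L[ℝ] H)
    (h0 : IsCompatibleCplxStr ω J0) (h1 : IsCompatibleCplxStr ω J1) :
    ∀ t ∈ Set.Icc (0 : ℝ) 1, ∀ a b : ℝ, ¬ (a = 0 ∧ b ≠ 0) →
      IsUnit ((((1 - t) • J0 + t • J1) - a • 1) ^ 2 + (b ^ 2) • (1 : H →L[ℝ] H)) := by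
  intro t ht a b hab
  have hK := h0.symm_interpolation h1 t
  have hg := h0.isCoercive_interpolation h1 ht
  by_cases ha : a = 0
  · obtain rfl : b = 0 := not_not.mp fun hb => hab ⟨ha, hb⟩
    subst ha
    simpa using (hg.isUnit_of_bilinearComp hω.skew hK).pow 2
  · exact hg.isUnit_shiftedSq_of_bilinearComp hω.skew hK ha b

/-- if `J0 ∼ J1` are `ω`-compatible complex structures with Hilbert–Schmidt
difference, then for every `t ∈ [0,1]` the (complexified) spectrum of
`K_t = (1-t)J0 + tJ1` is contained in the nonzero purely imaginary numbers; i.e. for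
every `a + b i` which is not nonzero purely imaginary, `(K_t - a)² + b²` is invertible. -/
theorem spectrum_of_interpolation_imaginary
    {H : Type*} [NormedAddCommGroup H] [InnerProductSpace ℝ H] [CompleteSpace H]
    [TopologicalSpace.SeparableSpace H]
    (ω : H →L[ℝ] H →L[ℝ] ℝ) (hω : IsStrongSymplectic ω)
    (J0 J1 : H →L[ℝ] H)
    (h0 : IsCompatibleCplxStr ω J0) (h1 : IsCompatibleCplxStr ω J1)
    (hHS : IsHilbertSchmidt (J0 - J1)) :
    ∀ t ∈ Set.Icc (0 : ℝ) 1, ∀ a b : ℝ, ¬ (a = 0 ∧ b ≠ 0) →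
      IsUnit ((((1 - t) • J0 + t • J1) - a • 1) ^ 2 + (b ^ 2) • (1 : H →L[ℝ] H)) :=
  spectrum_of_interpolation_imaginary_general ω hω J0 J1 h0 h1
end

section
/- Let H be a separable real Hilbert space with strong metric, and J0, J1 orthogonal complex structures with J0 − J1 Hilbert–Schmidt. Then the kernel of J0 + J1 is finite-dimensional and even-dimensional. -/
/-! The kernel `K` of `J0 + J1` is where `J1 = -J0`, so `J0` preserves `K` and restricts to a
complex structure on it; this forces `dim K` to be even, since `det (J0|K) ^ 2 = (-1) ^ dim K`.
On `K` the operator `J0 - J1 = 2 J0` stretches every vector by `2`; as `J0 - J1` is skew-adjoint,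
Bessel's inequality shows that each vector of an orthonormal family in `K` contributes `4` to the
Hilbert–Schmidt sum of `J0 - J1`, so such families have bounded size and `K` is
finite-dimensional. -/

open scoped RealInnerProductSpace

theorem Module.even_finrank_of_mul_self_eq_neg_one {𝕜 V : Type*} [Field 𝕜] [LinearOrder 𝕜]
    [IsStrictOrderedRing 𝕜] [AddCommGroup V] [Module 𝕜 V] {J : V →ₗ[𝕜] V} (hJ : J * J = -1) :
    Even (finrank 𝕜 V) := by
  have hdet : LinearMap.det J * LinearMap.det J = (-1) ^ finrank 𝕜 V := by
    rw [← map_mul, hJ, ← neg_one_smul 𝕜 1, LinearMap.det_smul, map_one, mul_one]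
  by_contra hodd
  rw [Nat.not_even_iff_odd.mp hodd |>.neg_one_pow] at hdet
  linarith [mul_self_nonneg (LinearMap.det J)]

theorem Submodule.finiteDimensional_of_orthonormal_card_le {E : Type*} [NormedAddCommGroup E]
    [InnerProductSpace ℝ E] (K : Submodule ℝ E) (N : ℕ)
    (h : ∀ (n : ℕ) (e : Fin n → E), Orthonormal ℝ e → (∀ j, e j ∈ K) → n ≤ N) :
    FiniteDimensional ℝ K := by
  refine Module.rank_lt_aleph0_iff.mp ((_root_.rank_le (n := N) fun s hs => ?_).trans_lt
    Cardinal.natCast_lt_aleph0)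
  set V := span ℝ (s : Set K)
  let e := stdOrthonormalBasis ℝ V
  rw [← finrank_span_finset_eq_card hs]
  exact h _ (fun j => ((e j : K) : E))
    (e.orthonormal.comp_linearIsometry (K.subtypeₗᵢ.comp V.subtypeₗᵢ)) fun j => (e j : K).2

section

variable {H E : Type*} [NormedAddCommGroup H] [InnerProductSpace ℝ H] [NormedAddCommGroup E]
  [InnerProductSpace ℝ E]

theorem Orthonormal.sum_norm_sq_le_tsum_norm_sq {ι κ : Type*} [Fintype κ] {T : H →L[ℝ] E}
    {S : E →L[ℝ] H} (hTS : ∀ x y, ⟪T x, y⟫ = ⟪x, S y⟫) (b : HilbertBasis ι ℝ H)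
    (hT : Summable fun i => ‖T (b i)‖ ^ 2) {e : κ → E} (he : Orthonormal ℝ e) :
    ∑ j, ‖S (e j)‖ ^ 2 ≤ ∑' i, ‖T (b i)‖ ^ 2 := by
  have hS : ∀ j, HasSum (fun i => ⟪e j, T (b i)⟫ ^ 2) (‖S (e j)‖ ^ 2) := fun j => by
    have h := b.hasSum_inner_mul_inner (S (e j)) (S (e j))
    rw [real_inner_self_eq_norm_sq] at h
    have hterm :
        (fun i => ⟪e j, T (b i)⟫ ^ 2) = fun i => ⟪S (e j), b i⟫ * ⟪b i, S (e j)⟫ :=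
      funext fun i => by rw [real_inner_comm (b i), ← hTS, real_inner_comm (T (b i)), sq]
    rwa [hterm]
  have hBessel : ∀ i, ∑ j, ⟪e j, T (b i)⟫ ^ 2 ≤ ‖T (b i)‖ ^ 2 := fun i => by
    simpa only [Real.norm_eq_abs, sq_abs] using
      he.sum_inner_products_le (T (b i)) (s := Finset.univ)
  have hsum := hasSum_sum fun j (_ : j ∈ Finset.univ) => hS j
  rw [← hsum.tsum_eq]
  exact hsum.summable.tsum_le_tsum hBessel hT

namespace ContinuousLinearMap

theorem inner_map_eq_neg_inner_map_of_mul_self_eq_neg_one {J : H →L[ℝ] H} (hsq : J * J = -1)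
    (hiso : ∀ v, ‖J v‖ = ‖v‖) (x y : H) : ⟪J x, y⟫ = -⟪x, J y⟫ := by
  have hJJ : J (J y) = -y := by simpa using DFunLike.congr_fun hsq y
  calc ⟪J x, y⟫ = -⟪J x, J (J y)⟫ := by rw [hJJ, inner_neg_right, neg_neg]
    _ = -⟪x, J y⟫ := by rw [(LinearMap.norm_map_iff_inner_map_map J).mp hiso]

variable {J0 J1 : H →L[ℝ] H}

theorem map_mem_ker_add_of_mem_ker_add (h0sq : J0 * J0 = -1) (h1sq : J1 * J1 = -1) {x : H}
    (hx : x ∈ LinearMap.ker ((J0 + J1 : H →L[ℝ] H) : H →ₗ[ℝ] H)) :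
    J0 x ∈ LinearMap.ker ((J0 + J1 : H →L[ℝ] H) : H →ₗ[ℝ] H) := by
  have hcomm : (J0 + J1) * J0 = J1 * (J0 + J1) := by
    rw [add_mul, mul_add, h0sq, h1sq]; abel
  simp only [LinearMap.mem_ker, coe_coe] at hx ⊢
  rw [← mul_apply_eq_comp, hcomm, mul_apply_eq_comp, hx, map_zero]

theorem norm_sub_apply_of_mem_ker_add (h0iso : ∀ v, ‖J0 v‖ = ‖v‖) {x : H}
    (hx : x ∈ LinearMap.ker ((J0 + J1 : H →L[ℝ] H) : H →ₗ[ℝ] H)) :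
    ‖(J0 - J1) x‖ = 2 * ‖x‖ := by
  have hJ1 : J1 x = -J0 x := eq_neg_of_add_eq_zero_right (by simpa using hx)
  rw [sub_apply, hJ1, sub_neg_eq_add, ← two_smul ℝ, norm_smul, h0iso, Real.norm_two]

end ContinuousLinearMap

end

open ContinuousLinearMap in
theorem ker_sum_of_complex_structures_even_dim_general
    {H : Type*} [NormedAddCommGroup H] [InnerProductSpace ℝ H]
    (J0 J1 : H →L[ℝ] H)
    (h0sq : J0 * J0 = -1) (h0iso : ∀ v : H, ‖J0 v‖ = ‖v‖)
    (h1sq : J1 * J1 = -1) (h1iso : ∀ v : H, ‖J1 v‖ = ‖v‖)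
    (hHS : IsHilbertSchmidt (J0 - J1)) :
    FiniteDimensional ℝ (LinearMap.ker ((J0 + J1 : H →L[ℝ] H) : H →ₗ[ℝ] H)) ∧
    Even (Module.finrank ℝ (LinearMap.ker ((J0 + J1 : H →L[ℝ] H) : H →ₗ[ℝ] H))) := by
  obtain ⟨ι, b, hsum⟩ := hHS
  have hskew : ∀ x y, ⟪(J0 - J1) x, y⟫ = ⟪x, (-(J0 - J1)) y⟫ := fun x y => by
    simp only [sub_apply, neg_apply, inner_sub_left, inner_sub_right, inner_neg_right,
      inner_map_eq_neg_inner_map_of_mul_self_eq_neg_one h0sq h0iso,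
      inner_map_eq_neg_inner_map_of_mul_self_eq_neg_one h1sq h1iso]
    ring
  refine ⟨Submodule.finiteDimensional_of_orthonormal_card_le _
    ⌊(∑' i, ‖(J0 - J1) (b i)‖ ^ 2) / 4⌋₊ fun n e he heK => ?_, ?_⟩
  · have hbound := he.sum_norm_sq_le_tsum_norm_sq hskew b hsum
    simp only [neg_apply, norm_neg, norm_sub_apply_of_mem_ker_add h0iso (heK _), he.1,
      Finset.sum_const, Finset.card_univ, Fintype.card_fin, nsmul_eq_mul] at hbound
    exact Nat.le_floor (by rw [le_div_iff₀ four_pos]; linarith)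
  · refine Module.even_finrank_of_mul_self_eq_neg_one
      (J := (J0 : H →ₗ[ℝ] H).restrict fun x => map_mem_ker_add_of_mem_ker_add h0sq h1sq) ?_
    ext x
    simpa using DFunLike.congr_fun h0sq (x : H)

/-- if `J0, J1` are orthogonal complex structures on a separable real
Hilbert space with `J0 − J1` Hilbert–Schmidt, then `ker (J0 + J1)` is
finite-dimensional of even dimension. -/
theorem ker_sum_of_complex_structures_even_dim
    {H : Type*} [NormedAddCommGroup H] [InnerProductSpace ℝ H] [CompleteSpace H]
    [TopologicalSpace.SeparableSpace H]
    (J0 J1 : H →L[ℝ] H)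
    (h0sq : J0 * J0 = -1) (h0iso : ∀ v : H, ‖J0 v‖ = ‖v‖)
    (h1sq : J1 * J1 = -1) (h1iso : ∀ v : H, ‖J1 v‖ = ‖v‖)
    (hHS : IsHilbertSchmidt (J0 - J1)) :
    FiniteDimensional ℝ (LinearMap.ker ((J0 + J1 : H →L[ℝ] H) : H →ₗ[ℝ] H)) ∧
    Even (Module.finrank ℝ (LinearMap.ker ((J0 + J1 : H →L[ℝ] H) : H →ₗ[ℝ] H))) :=
  ker_sum_of_complex_structures_even_dim_general J0 J1 h0sq h0iso h1sq h1iso hHS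
end
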